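/- arXiv:1208.0578 — 3 statements merged into one kernel-verified Lean document; each statement's English description precedes it below -/
import Mathlib

section
/- Let D < 0 be real, let V : ℝ → ℝ be continuous with V(X) ≥ 0 for all X, let P > 0, and let φ₁, φ₂ : ℝ → ℂ be twice continuously differentiable P-periodic functions, not both identically zero, satisfying φ₁'' + D·φ₁ − V·(2φ₁ + φ₂) = i·Λ·φ₁ and φ₂'' + D·φ₂ − V·(φ₁ + 2φ₂) = −i·Λ·φ₂ on ℝ for some Λ ∈ ℂ. Then Λ is purely imaginary: Re(Λ) = 0. -/
open Complex ComplexConjugate intervalIntegral Set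

/-!
Multiply the first equation by `conj φ₁`, the second by `conj φ₂`, add and integrate over a
period. Integration by parts turns the second-derivative terms into `-∫ (|φ₁'|² + |φ₂'|²)`, and
the remaining real terms into `-∫ R` with `R = -D (|φ₁|² + |φ₂|²) + V (|φ₁|² + |φ₂|² + |φ₁ + φ₂|²)`,
which is nonnegative, and positive wherever `φ ≠ 0`, because `D < 0 ≤ V`. Hence
`iΛ · ∫ (|φ₁|² - |φ₂|²)` is a negative real number, which forces `∫ (|φ₁|² - |φ₂|²) ≠ 0` and
then `Re Λ = 0`.
-/

theorem Function.Periodic.deriv {𝕜 F : Type*} [NontriviallyNormedField 𝕜] [NormedAddCommGroup F]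
    [NormedSpace 𝕜 F] {f : 𝕜 → F} {c : 𝕜} (hf : Function.Periodic f c) :
    Function.Periodic (deriv f) c := fun x => by
  rw [← deriv_comp_add_const, hf.funext]

theorem Function.Periodic.exists_mem_Ico₀_ne_zero {α M : Type*} [AddCommGroup α] [LinearOrder α]
    [IsOrderedAddMonoid α] [Archimedean α] [Zero M] {f : α → M} {c : α}
    (hf : Function.Periodic f c) (hc : 0 < c) (hne : f ≠ 0) : ∃ y ∈ Ico 0 c, f y ≠ 0 := by
  obtain ⟨x, hx⟩ := Function.ne_iff.mp hne
  obtain ⟨y, hy, hxy⟩ := hf.exists_mem_Ico₀ hc x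
  exact ⟨y, hy, hxy ▸ hx⟩

theorem integral_conj_mul_deriv_deriv_of_periodic {f : ℝ → ℂ} {P : ℝ} (hf : ContDiff ℝ 2 f)
    (hper : Function.Periodic f P) :
    ∫ x in 0..P, conj (f x) * deriv (deriv f) x
      = -((∫ x in 0..P, normSq (deriv f x) : ℝ) : ℂ) := by
  have hd : Differentiable ℝ f := hf.differentiable (by norm_num)
  have hd' : Differentiable ℝ (deriv f) := hf.differentiable_deriv_two
  have hconj : ∀ x, HasDerivAt (fun y => conj (f y)) (conj (deriv f x)) x := fun x => by
    simpa only [starRingEnd_apply] using (hd x).hasDerivAt.star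
  rw [integral_mul_deriv_eq_deriv_mul (fun x _ => hconj x) (fun x _ => (hd' x).hasDerivAt)
      ((continuous_conj.comp hd'.continuous).intervalIntegrable _ _)
      ((show Continuous (deriv (deriv f)) by fun_prop).intervalIntegrable _ _)]
  have hP : f P = f 0 := by simpa using hper 0
  have hP' : deriv f P = deriv f 0 := by simpa using hper.deriv 0
  rw [hP, hP', sub_self, zero_sub, ← integral_ofReal]
  simp only [normSq_eq_conj_mul_self]

/-- Minus `conj a · (D a - V (2a + b)) + conj b · (D b - V (a + 2b))`, which is real; the cross
term `2 Re (a conj b)` is written through `|a + b|²` to make its sign visible. -/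
def formDensity (D V : ℝ) (a b : ℂ) : ℝ :=
  -D * (normSq a + normSq b) + V * (normSq a + normSq b + normSq (a + b))

@[fun_prop]
theorem Continuous.formDensity {α : Type*} [TopologicalSpace α] {D : ℝ} {V : α → ℝ}
    {f g : α → ℂ} (hV : Continuous V) (hf : Continuous f) (hg : Continuous g) :
    Continuous fun x => formDensity D (V x) (f x) (g x) := by
  unfold _root_.formDensity
  fun_prop

theorem conj_mul_add_conj_mul_eq {a b a'' b'' Λ : ℂ} {D V : ℝ}
    (h₁ : a'' + D * a - V * (2 * a + b) = I * Λ * a)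
    (h₂ : b'' + D * b - V * (a + 2 * b) = -(I * Λ * b)) :
    conj a * a'' + conj b * b''
      = I * Λ * ((normSq a - normSq b : ℝ) : ℂ) + (formDensity D V a b : ℂ) := by
  simp only [formDensity]
  push_cast
  simp only [normSq_eq_conj_mul_self, map_add]
  linear_combination conj a * h₁ + conj b * h₂

theorem formDensity_nonneg {D V : ℝ} (hD : D ≤ 0) (hV : 0 ≤ V) (a b : ℂ) :
    0 ≤ formDensity D V a b := by
  unfold formDensity
  have := normSq_nonneg a; have := normSq_nonneg b; have := normSq_nonneg (a + b)
  nlinarith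

theorem formDensity_pos {D V : ℝ} (hD : D < 0) (hV : 0 ≤ V) {a b : ℂ} (hab : (a, b) ≠ 0) :
    0 < formDensity D V a b := by
  have hpos : 0 < normSq a + normSq b := by
    rcases not_and_or.mp (Prod.mk_eq_zero.not.mp hab) with ha | hb
    · exact add_pos_of_pos_of_nonneg (normSq_pos.mpr ha) (normSq_nonneg b)
    · exact add_pos_of_nonneg_of_pos (normSq_nonneg a) (normSq_pos.mpr hb)
  unfold formDensity
  have := normSq_nonneg (a + b)
  nlinarith

theorem I_mul_mul_integral_normSq_sub_normSq {D : ℝ} {V : ℝ → ℝ} (hV : Continuous V) {P : ℝ}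
    {φ₁ φ₂ : ℝ → ℂ} (hφ₁ : ContDiff ℝ 2 φ₁) (hφ₂ : ContDiff ℝ 2 φ₂)
    (hper₁ : Function.Periodic φ₁ P) (hper₂ : Function.Periodic φ₂ P) {Λ : ℂ}
    (heq : ∀ X, deriv (deriv φ₁) X + D * φ₁ X - V X * (2 * φ₁ X + φ₂ X) = I * Λ * φ₁ X ∧
      deriv (deriv φ₂) X + D * φ₂ X - V X * (φ₁ X + 2 * φ₂ X) = -(I * Λ * φ₂ X)) :
    I * Λ * ((∫ x in 0..P, (normSq (φ₁ x) - normSq (φ₂ x)) : ℝ) : ℂ)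
      = ((-(∫ x in 0..P, normSq (deriv φ₁ x)) - (∫ x in 0..P, normSq (deriv φ₂ x))
          - ∫ x in 0..P, formDensity D (V x) (φ₁ x) (φ₂ x) : ℝ) : ℂ) := by
  have hbyparts :
      ∫ x in 0..P, (conj (φ₁ x) * deriv (deriv φ₁) x + conj (φ₂ x) * deriv (deriv φ₂) x)
        = -((∫ x in 0..P, normSq (deriv φ₁ x) : ℝ) : ℂ)
          - ((∫ x in 0..P, normSq (deriv φ₂ x) : ℝ) : ℂ) := by
    rw [integral_add ((by fun_prop : Continuous _).intervalIntegrable _ _)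
      ((by fun_prop : Continuous _).intervalIntegrable _ _),
      integral_conj_mul_deriv_deriv_of_periodic hφ₁ hper₁,
      integral_conj_mul_deriv_deriv_of_periodic hφ₂ hper₂, sub_eq_add_neg]
  have hpointwise := integral_congr (a := 0) (b := P) (μ := MeasureTheory.volume)
    fun x _ => conj_mul_add_conj_mul_eq (heq x).1 (heq x).2
  rw [hbyparts, integral_add ((by fun_prop : Continuous _).intervalIntegrable _ _)
      ((by fun_prop : Continuous _).intervalIntegrable _ _),
    integral_const_mul, integral_ofReal, integral_ofReal] at hpointwise
  push_cast at hpointwise ⊢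
  linear_combination -hpointwise

theorem re_eq_zero_of_I_mul_mul_ofReal_eq_ofReal {Λ : ℂ} {c r : ℝ} (hr : r ≠ 0)
    (h : I * Λ * c = r) : Λ.re = 0 := by
  have him : Λ.re * c = 0 := by simpa using congrArg im h
  have hc : c ≠ 0 := by
    rintro rfl
    exact hr (by simpa using (congrArg re h).symm)
  exact (mul_eq_zero.mp him).resolve_right hc

/-- Let D < 0, V : ℝ → ℝ continuous with V ≥ 0, P > 0, and let
φ₁, φ₂ be twice continuously differentiable P-periodic functions, not both
identically zero, satisfying
φ₁'' + D·φ₁ − V·(2φ₁ + φ₂) = i·Λ·φ₁ and φ₂'' + D·φ₂ − V·(φ₁ + 2φ₂) = −i·Λ·φ₂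
on ℝ for some Λ ∈ ℂ. Then Λ is purely imaginary: Re(Λ) = 0. -/
theorem negative_D_implies_purely_imaginary_eigenvalue
    (D : ℝ) (hD : D < 0) (V : ℝ → ℝ) (hVcont : Continuous V) (hVpos : ∀ X, 0 ≤ V X)
    (P : ℝ) (hP : 0 < P) (φ₁ φ₂ : ℝ → ℂ)
    (hφ₁ : ContDiff ℝ 2 φ₁) (hφ₂ : ContDiff ℝ 2 φ₂)
    (hper₁ : ∀ X : ℝ, φ₁ (X + P) = φ₁ X) (hper₂ : ∀ X : ℝ, φ₂ (X + P) = φ₂ X)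
    (hnz : ¬(φ₁ = 0 ∧ φ₂ = 0)) (Λ : ℂ)
    (heq : ∀ X : ℝ,
      deriv (deriv φ₁) X + (D : ℂ) * φ₁ X - (V X : ℂ) * (2 * φ₁ X + φ₂ X)
          = Complex.I * Λ * φ₁ X ∧
      deriv (deriv φ₂) X + (D : ℂ) * φ₂ X - (V X : ℂ) * (φ₁ X + 2 * φ₂ X)
          = -(Complex.I * Λ * φ₂ X)) :
    Λ.re = 0 := by
  have hne : (fun x => (φ₁ x, φ₂ x)) ≠ 0 := by
    contrapose! hnz
    exact ⟨funext fun x => congrArg Prod.fst (congrFun hnz x),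
      funext fun x => congrArg Prod.snd (congrFun hnz x)⟩
  obtain ⟨y, hy, hy_ne⟩ := Function.Periodic.exists_mem_Ico₀_ne_zero
    (fun x => by simp only [hper₁ x, hper₂ x]) hP hne
  have hform : 0 < ∫ x in 0..P, formDensity D (V x) (φ₁ x) (φ₂ x) :=
    integral_pos hP (by fun_prop : Continuous _).continuousOn
      (fun x _ => formDensity_nonneg hD.le (hVpos x) _ _)
      ⟨y, Ico_subset_Icc_self hy, formDensity_pos hD (hVpos y) hy_ne⟩
  have hkin₁ : 0 ≤ ∫ x in 0..P, normSq (deriv φ₁ x) :=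
    integral_nonneg hP.le fun _ _ => normSq_nonneg _
  have hkin₂ : 0 ≤ ∫ x in 0..P, normSq (deriv φ₂ x) :=
    integral_nonneg hP.le fun _ _ => normSq_nonneg _
  exact re_eq_zero_of_I_mul_mul_ofReal_eq_ofReal (by linarith)
    (I_mul_mul_integral_normSq_sub_normSq hVcont hφ₁ hφ₂ hper₁ hper₂ heq)
end

section
/- Let β > 0, C > 0 and A ≠ 0 be real, and for κ ∈ ℝ define m(κ) = A² − (1 + κ²)/(C·β). Then there exists κ ∈ ℝ with A⁴ − m(κ)² > 0 if and only if C > 1/(2·β·A²). Equivalently, with C = (Δt/Δx)², the squared growth rate λ² = A⁴ − m(κ)² of some perturbation mode is positive if and only if Δt > Δx/√(2·β·A²). -/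
/-- Let β > 0, C > 0, A ≠ 0 and m(κ) = A² − (1 + κ²)/(C·β).
Then ∃ κ with A⁴ − m(κ)² > 0 iff C > 1/(2·β·A²); equivalently, with
C = (Δt/Δx)², iff Δt > Δx/√(2·β·A²). -/
theorem fd_ssm_plane_wave_instability_threshold (β C A : ℝ)
    (hβ : 0 < β) (hC : 0 < C) (hA : A ≠ 0) :
    ((∃ κ : ℝ, A ^ 4 - (A ^ 2 - (1 + κ ^ 2) / (C * β)) ^ 2 > 0) ↔
      C > 1 / (2 * β * A ^ 2)) ∧
    (∀ Δt Δx : ℝ, 0 < Δt → 0 < Δx → C = (Δt / Δx) ^ 2 →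
      ((∃ κ : ℝ, A ^ 4 - (A ^ 2 - (1 + κ ^ 2) / (C * β)) ^ 2 > 0) ↔
        Δt > Δx / Real.sqrt (2 * β * A ^ 2))) := by
  have hA2 : 0 < A ^ 2 := by positivity
  have hCβ : 0 < C * β := by positivity
  have key : (∃ κ : ℝ, A ^ 4 - (A ^ 2 - (1 + κ ^ 2) / (C * β)) ^ 2 > 0) ↔
      C > 1 / (2 * β * A ^ 2) := by
    constructor
    · rintro ⟨κ, hκ⟩
      set t : ℝ := (1 + κ ^ 2) / (C * β) with ht
      have ht1 : 1 / (C * β) ≤ t := by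
        rw [ht]
        gcongr
        all_goals nlinarith [sq_nonneg κ]
      have ht0 : 0 < t := lt_of_lt_of_le (by positivity) ht1
      -- from hκ : A^4 - (A^2 - t)^2 > 0 deduce t < 2 A^2
      have h2 : t < 2 * A ^ 2 := by nlinarith
      have h3 : 1 / (C * β) < 2 * A ^ 2 := lt_of_le_of_lt ht1 h2
      rw [gt_iff_lt, div_lt_iff₀ (by positivity)]
      rw [div_lt_iff₀ hCβ] at h3
      nlinarith
    · intro h
      refine ⟨0, ?_⟩
      rw [gt_iff_lt, div_lt_iff₀ (by positivity)] at h
      have ht : (1 + (0:ℝ) ^ 2) / (C * β) = 1 / (C * β) := by norm_num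
      rw [ht]
      have h1 : 1 / (C * β) < 2 * A ^ 2 := by
        rw [div_lt_iff₀ hCβ]; nlinarith
      have h0 : 0 < 1 / (C * β) := by positivity
      nlinarith
  refine ⟨key, fun Δt Δx hΔt hΔx hCeq => ?_⟩
  rw [key]
  have hs0 : 0 < Real.sqrt (2 * β * A ^ 2) := Real.sqrt_pos.mpr (by positivity)
  set s := Real.sqrt (2 * β * A ^ 2) with hsdef
  have hs2 : s ^ 2 = 2 * β * A ^ 2 := Real.sq_sqrt (by positivity)
  constructor
  · intro h
    rw [gt_iff_lt, div_lt_iff₀ (by positivity)] at h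
    rw [gt_iff_lt, div_lt_iff₀ hs0]
    -- h : 1 < C * (2 β A²) = (Δt/Δx)^2 * s^2
    have h2 : Δx ^ 2 < (Δt * s) ^ 2 := by
      have := hCeq ▸ h
      have hdd : (Δt / Δx) ^ 2 = Δt ^ 2 / Δx ^ 2 := div_pow _ _ _
      rw [hdd, div_mul_eq_mul_div, lt_div_iff₀ (by positivity)] at this
      nlinarith
    nlinarith [mul_pos hΔt hs0]
  · intro h
    rw [gt_iff_lt, div_lt_iff₀ hs0] at h
    rw [gt_iff_lt, div_lt_iff₀ (by positivity), hCeq]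
    have hdd : (Δt / Δx) ^ 2 = Δt ^ 2 / Δx ^ 2 := div_pow _ _ _
    rw [hdd, div_mul_eq_mul_div, lt_div_iff₀ (by positivity)]
    nlinarith [mul_pos hΔt hs0]
end

section
/- Let f : ℝ → ℝ be six times continuously differentiable and fix x ∈ ℝ. Then the Numerov local truncation error h ↦ f(x+h) − 2·f(x) + f(x−h) − (h²/12)·( f''(x+h) + 10·f''(x) + f''(x−h) ) is O(h⁶) as h → 0. -/
/-!
Taylor-expand `f` to order 5 and `f''` to order 3 about `x`. In `f (x + h) + f (x - h)` the odd
terms cancel, so the second difference of `f` is `f'' x * h² + f⁽⁴⁾ x * h⁴ / 12 + O(h⁶)` and that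
of `f''` is `f⁽⁴⁾ x * h² + O(h⁴)`. The Numerov bracket is `12 f'' x` plus the second difference of
`f''`, so after multiplying by `h² / 12` its `h²` and `h⁴` terms cancel those of `f`.
-/

open Asymptotics Filter Topology Set Finset Nat

section

variable {E : Type*} [NormedAddCommGroup E] [NormedSpace ℝ E] {f : ℝ → E} {n : ℕ}

theorem taylor_isBigO_univ {x₀ : ℝ} (hf : ContDiff ℝ (n + 1) f) :
    (fun x ↦ f x - taylorWithinEval f n univ x₀ x) =O[𝓝 x₀] fun x ↦ (x - x₀) ^ (n + 1) := by
  have hsucc := (taylor_isLittleO_univ (n := n + 1) (x₀ := x₀) (by exact_mod_cast hf)).isBigO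
  have hlast : (fun x ↦ taylorWithinEval f (n + 1) univ x₀ x - taylorWithinEval f n univ x₀ x)
      =O[𝓝 x₀] fun x ↦ (x - x₀) ^ (n + 1) := by
    simp only [taylorWithinEval_succ, add_sub_cancel_left]
    refine isBigO_of_le' (c := ‖((n + 1 : ℝ) * n !)⁻¹‖ * ‖iteratedDerivWithin (n + 1) f univ x₀‖)
      _ fun x ↦ ?_
    rw [norm_smul, norm_mul]
    exact le_of_eq (by ring)
  exact (hsucc.add hlast).congr_left fun x ↦ sub_add_sub_cancel _ _ _

theorem taylor_comp_add_isBigO (hf : ContDiff ℝ (n + 1) f) (x : ℝ) :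
    (fun h ↦ f (x + h) - ∑ k ∈ range (n + 1), ((k ! : ℝ)⁻¹ * h ^ k) • iteratedDeriv k f x)
      =O[𝓝 0] fun h ↦ h ^ (n + 1) := by
  have hx : Tendsto (x + ·) (𝓝 0) (𝓝 x) := by
    simpa using (continuous_const_add x).tendsto 0
  refine ((taylor_isBigO_univ (x₀ := x) hf).comp_tendsto hx).congr (fun h ↦ ?_) (fun h ↦ ?_) <;>
    simp [taylor_within_apply]

theorem taylor_comp_add_add_comp_sub_isBigO (hf : ContDiff ℝ (n + 1) f) (x : ℝ) :
    (fun h ↦ f (x + h) + f (x - h)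
        - ∑ k ∈ range (n + 1), ((k ! : ℝ)⁻¹ * (h ^ k + (-h) ^ k)) • iteratedDeriv k f x)
      =O[𝓝 0] fun h ↦ h ^ (n + 1) := by
  have hplus := taylor_comp_add_isBigO hf x
  have hneg : Tendsto (fun h : ℝ ↦ -h) (𝓝 0) (𝓝 0) := by
    simpa using (continuous_neg (G := ℝ)).tendsto 0
  have hminus := (hplus.comp_tendsto hneg).trans
    (isBigO_of_le (g := fun h : ℝ ↦ h ^ (n + 1)) (𝓝 0) fun h ↦ by simp [norm_pow])
  refine (hplus.add hminus).congr_left fun h ↦ ?_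
  simp only [Function.comp_apply, ← sub_eq_add_neg, mul_add, add_smul, sum_add_distrib]
  abel

theorem second_difference_sub_isBigO_pow_four (hf : ContDiff ℝ 4 f) (x : ℝ) :
    (fun h ↦ f (x + h) - (2 : ℝ) • f x + f (x - h) - h ^ 2 • iteratedDeriv 2 f x)
      =O[𝓝 0] fun h ↦ h ^ 4 := by
  refine (taylor_comp_add_add_comp_sub_isBigO (n := 3) hf x).congr_left fun h ↦ ?_
  simp only [sum_range_succ, sum_range_zero, iteratedDeriv_zero, iteratedDeriv_one]
  norm_num [factorial]
  module

theorem second_difference_sub_isBigO_pow_six (hf : ContDiff ℝ 6 f) (x : ℝ) :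
    (fun h ↦ f (x + h) - (2 : ℝ) • f x + f (x - h) - h ^ 2 • iteratedDeriv 2 f x
        - (h ^ 4 / 12) • iteratedDeriv 4 f x)
      =O[𝓝 0] fun h ↦ h ^ 6 := by
  refine (taylor_comp_add_add_comp_sub_isBigO (n := 5) hf x).congr_left fun h ↦ ?_
  simp only [sum_range_succ, sum_range_zero, iteratedDeriv_zero, iteratedDeriv_one]
  norm_num [factorial]
  module

end

/-- For f : ℝ → ℝ six times continuously differentiable and fixed
x ∈ ℝ, the Numerov local truncation error
h ↦ f(x+h) − 2f(x) + f(x−h) − (h²/12)(f''(x+h) + 10f''(x) + f''(x−h))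
is O(h⁶) as h → 0. -/
theorem numerov_local_truncation_error (f : ℝ → ℝ) (hf : ContDiff ℝ 6 f) (x : ℝ) :
    (fun h : ℝ =>
        f (x + h) - 2 * f x + f (x - h)
          - (h ^ 2 / 12) * (deriv (deriv f) (x + h) + 10 * deriv (deriv f) x
              + deriv (deriv f) (x - h)))
      =O[nhds (0 : ℝ)] (fun h : ℝ => h ^ 6) := by
  have hderiv2 : deriv (deriv f) = iteratedDeriv 2 f := by
    simp only [iteratedDeriv_eq_iterate, Function.iterate_succ_apply, Function.iterate_zero_apply]
  have hderiv2_contDiff : ContDiff ℝ 4 (iteratedDeriv 2 f) := by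
    rw [iteratedDeriv_eq_iterate]
    exact hf.iterate_deriv' 4 2
  have hderiv4 : iteratedDeriv 2 (iteratedDeriv 2 f) = iteratedDeriv 4 f := by
    simp only [iteratedDeriv_eq_iterate, ← Function.iterate_add_apply]
  have hf_expansion := second_difference_sub_isBigO_pow_six hf x
  have hderiv2_expansion := ((isBigO_refl (fun h : ℝ ↦ h ^ 2) _).const_mul_left (12 : ℝ)⁻¹).mul
    (second_difference_sub_isBigO_pow_four hderiv2_contDiff x)
  refine (hf_expansion.sub (hderiv2_expansion.congr_right fun h ↦ by ring)).congr_left fun h ↦ ?_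
  simp only [hderiv2, hderiv4, smul_eq_mul]
  ring
end
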